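/- Assume q is odd and Λ > q. Let r = 1/(2q) − 1/(2Λ) and c_m = (m + 1/2)/q for integers m with 0 ≤ m < (q+1)/2. Then: (i) p vanishes identically on [c_m − r, c_m + r] ∩ [0,1/2] for each such m; (ii) every nonempty open interval J ⊆ (0,1/2) on which p is constant is contained in some [c_m − r, c_m + r], and the constant value of p on J is 0. -/

import Mathlib

noncomputable def e (x : ℝ) : ℂ := Complex.exp (2 * Real.pi * Complex.I * x)

noncomputable def G (a k : ℤ) (q : ℕ) : ℂ :=
  ∑ ℓ ∈ Finset.range q, e (((a * ℓ ^ 2 + k * ℓ : ℤ) : ℝ) / q)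

noncomputable def invMod (a : ℤ) (q : ℕ) : ℕ := ZMod.val ((a : ZMod q)⁻¹)

noncomputable def cc (a : ℤ) (q : ℕ) (k : ℤ) : ℂ :=
  if Odd q then e ((invMod (4 * a) q : ℝ) * (k : ℝ) ^ 2 / q)
  else if Even (k + (q : ℤ) / 2) then
    (Real.sqrt 2 : ℂ) * e ((invMod a q : ℝ) * (k : ℝ) ^ 2 / (4 * q))
  else 0

noncomputable def Iset (Λ : ℝ) (q : ℕ) (x : ℝ) : Finset ℤ :=
  Finset.Icc ⌈x * q - q / (2 * Λ)⌉ ⌊x * q + q / (2 * Λ)⌋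

noncomputable def pden (N q : ℕ) (Λ : ℝ) (a : ℤ) (x : ℝ) : ℝ :=
  (4 * Λ / q) * ‖∑ k ∈ Iset Λ q x,
    cc a q k * (Real.sin (2 * Real.pi * N * Λ * (x - k / q)) : ℂ)‖ ^ 2

noncomputable def Splus (N q : ℕ) (Λ : ℝ) (a : ℤ) (x : ℝ) : ℂ :=
  ∑ k ∈ Iset Λ q x, cc a q k * e (N * Λ * k / q)

noncomputable def Sminus (N q : ℕ) (Λ : ℝ) (a : ℤ) (x : ℝ) : ℂ :=
  ∑ k ∈ Iset Λ q x, cc a q k * e (-(N * Λ * k / q))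

def Nonsingular (Λ : ℝ) (q : ℕ) (x : ℝ) : Prop :=
  (Odd q → ∀ n : ℤ, x * q - q / (2 * Λ) ≠ n ∧ x * q + q / (2 * Λ) ≠ n) ∧
  (Even q → ∀ n : ℤ, Even n →
    x * q - q / (2 * Λ) + q / 2 ≠ n ∧ x * q + q / (2 * Λ) + q / 2 ≠ n)

noncomputable def Dnear (x : ℝ) : ℝ := |x - round x|

/-!
Since `Λ > q`, the window `I(x)` has half-length `q/(2Λ) < 1/2` and so contains at most one
integer `k`; when `xq` lies at distance exactly `q/(2Λ)` from `k`, the sine at `k` vanishes. Hence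
`p(x) = 0` as soon as `xq` is at distance at least `q/(2Λ)` from every integer, while near any other
point `p` is `(4Λ/q) sin²(2πNΛ(x - k/q))`, a real-analytic function that is constant on no interval.
An interval on which `p` is constant therefore avoids those points, and being connected it cannot
cross an integer after scaling by `q`: it lies in one gap `[(m + q/(2Λ))/q, (m + 1 - q/(2Λ))/q]`.
-/

open Filter Topology

lemma norm_e (t : ℝ) : ‖e t‖ = 1 := by
  simp [e, Complex.norm_exp]

lemma norm_cc_of_odd {q : ℕ} (hq : Odd q) (a k : ℤ) : ‖cc a q k‖ = 1 := by
  rw [cc, if_pos hq, norm_e]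

lemma mem_Iset_iff {Λ : ℝ} {q : ℕ} {x : ℝ} {k : ℤ} :
    k ∈ Iset Λ q x ↔ |x * q - k| ≤ q / (2 * Λ) := by
  rw [Iset, Finset.mem_Icc, Int.ceil_le, Int.le_floor, abs_sub_le_iff]
  constructor <;> rintro ⟨h₁, h₂⟩ <;> constructor <;> linarith

lemma Iset_eq_singleton {Λ : ℝ} {q : ℕ} (hqΛ : (q : ℝ) < Λ) {x : ℝ} {k : ℤ}
    (hk : |x * q - k| < q / (2 * Λ)) : Iset Λ q x = {k} := by
  have hΛ : 0 < Λ := (Nat.cast_nonneg q).trans_lt hqΛ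
  have hhalf : (q : ℝ) / (2 * Λ) < 1 / 2 := by
    rw [div_lt_div_iff₀ (by positivity) two_pos]; linarith
  refine Finset.eq_singleton_iff_unique_mem.2 ⟨mem_Iset_iff.2 hk.le, fun j hj => ?_⟩
  have hjk : |(j : ℝ) - k| < 1 := by
    calc |(j : ℝ) - k| = |(x * q - k) - (x * q - j)| := by ring_nf
      _ ≤ |x * q - k| + |x * q - j| := abs_sub _ _
      _ < 1 := by linarith [mem_Iset_iff.1 hj]
  rw [← Int.cast_sub, ← Int.cast_abs, ← Int.cast_one, Int.cast_lt] at hjk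
  rw [abs_lt] at hjk
  omega

lemma sin_eq_zero_of_abs_mul_sub_eq {Λ : ℝ} (hΛ : 0 < Λ) {q : ℕ} (hq : 0 < q) (N : ℕ)
    {x : ℝ} {k : ℤ} (hk : |x * q - k| = q / (2 * Λ)) :
    Real.sin (2 * Real.pi * N * Λ * (x - k / q)) = 0 := by
  have hh : (0 : ℝ) < q / (2 * Λ) := by positivity
  have harg : 2 * Real.pi * N * Λ * (x - k / q) = N * Real.pi * ((x * q - k) / (q / (2 * Λ))) := by
    field_simp
  rcases (abs_eq hh.le).1 hk with h | h
  · rw [harg, h, div_self hh.ne', mul_one, Real.sin_nat_mul_pi]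
  · rw [harg, h, neg_div, div_self hh.ne', mul_neg_one, Real.sin_neg, Real.sin_nat_mul_pi, neg_zero]

lemma pden_eq_zero_of_forall_le_abs_mul_sub {Λ : ℝ} (hΛ : 0 < Λ) {q : ℕ} (hq : 0 < q) (N : ℕ)
    (a : ℤ) {x : ℝ} (hfar : ∀ k : ℤ, q / (2 * Λ) ≤ |x * q - k|) : pden N q Λ a x = 0 := by
  have hterm : ∀ k ∈ Iset Λ q x,
      cc a q k * (Real.sin (2 * Real.pi * N * Λ * (x - k / q)) : ℂ) = 0 := fun k hk => by
    rw [sin_eq_zero_of_abs_mul_sub_eq hΛ hq N ((mem_Iset_iff.1 hk).antisymm (hfar k)),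
      Complex.ofReal_zero, mul_zero]
  rw [pden, Finset.sum_eq_zero hterm, norm_zero, zero_pow two_ne_zero, mul_zero]

lemma pden_eq_of_abs_mul_sub_lt {Λ : ℝ} {q : ℕ} (hodd : Odd q) (hqΛ : (q : ℝ) < Λ) (N : ℕ)
    (a : ℤ) {x : ℝ} {k : ℤ} (hk : |x * q - k| < q / (2 * Λ)) :
    pden N q Λ a x = 4 * Λ / q * Real.sin (2 * Real.pi * N * Λ * (x - k / q)) ^ 2 := by
  rw [pden, Iset_eq_singleton hqΛ hk, Finset.sum_singleton, norm_mul, norm_cc_of_odd hodd,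
    one_mul, Complex.norm_real, Real.norm_eq_abs, sq_abs]

lemma not_eventually_sin_sq_eq {ω : ℝ} (hω : ω ≠ 0) (φ x₀ c : ℝ) :
    ¬ ∀ᶠ x in 𝓝 x₀, Real.sin (ω * x + φ) ^ 2 = c := by
  intro h
  have hanalytic : AnalyticOnNhd ℝ (fun x => Real.sin (ω * x + φ) ^ 2) Set.univ :=
    fun _ _ => by fun_prop
  have hglobal := hanalytic.eq_of_eventuallyEq analyticOnNhd_const h
  have h₀ := congrFun hglobal (-φ / ω)
  have h₁ := congrFun hglobal ((Real.pi / 2 - φ) / ω)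
  simp only [mul_div_cancel₀ _ hω, neg_add_cancel, sub_add_cancel, Real.sin_zero,
    Real.sin_pi_div_two, zero_pow two_ne_zero, one_pow] at h₀ h₁
  exact one_ne_zero (h₁.trans h₀.symm)

lemma forall_le_abs_mul_sub_of_pden_eq {Λ : ℝ} {q : ℕ} (hodd : Odd q) (hqΛ : (q : ℝ) < Λ)
    {N : ℕ} (hN : 0 < N) (a : ℤ) {S : Set ℝ} (hS : IsOpen S) {v : ℝ}
    (hconst : ∀ x ∈ S, pden N q Λ a x = v) : ∀ x ∈ S, ∀ k : ℤ, q / (2 * Λ) ≤ |x * q - k| := by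
  intro x hx k
  by_contra! hk
  have hΛ : 0 < Λ := (Nat.cast_nonneg q).trans_lt hqΛ
  have hq : (0 : ℝ) < q := Nat.cast_pos.2 hodd.pos
  have hω : 2 * Real.pi * N * Λ ≠ 0 := by positivity
  have hnear : ∀ᶠ y : ℝ in 𝓝 x, |y * q - k| < q / (2 * Λ) :=
    (by fun_prop : Continuous fun y : ℝ => |y * q - k|).continuousAt.eventually_lt
      continuousAt_const hk
  refine not_eventually_sin_sq_eq hω (-(2 * Real.pi * N * Λ * k / q)) x (v / (4 * Λ / q)) ?_
  filter_upwards [hS.mem_nhds hx, hnear] with y hyS hyk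
  rw [eq_div_iff (by positivity), mul_comm, ← hconst y hyS,
    pden_eq_of_abs_mul_sub_lt hodd hqΛ N a hyk]
  ring_nf

lemma floor_mul_eq_of_ordConnected {S : Set ℝ} (hS : S.OrdConnected) {q : ℝ} (hq : 0 < q)
    (hS_int : ∀ x ∈ S, ∀ k : ℤ, x * q ≠ k) {x y : ℝ} (hx : x ∈ S) (hy : y ∈ S) :
    ⌊x * q⌋ = ⌊y * q⌋ := by
  wlog hxy : x ≤ y generalizing x y
  · exact (this hy hx (le_of_not_ge hxy)).symm
  by_contra hne
  have hlt : ⌊x * q⌋ < ⌊y * q⌋ :=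
    (Int.floor_le_floor (mul_le_mul_of_nonneg_right hxy hq.le)).lt_of_ne hne
  have hxk : x * q < ⌊y * q⌋ := Int.floor_lt.1 hlt
  have hmem : (⌊y * q⌋ : ℝ) / q ∈ S :=
    hS.out hx hy ⟨(lt_div_iff₀ hq).2 hxk |>.le, (div_le_iff₀ hq).2 (Int.floor_le _)⟩
  exact hS_int _ hmem ⌊y * q⌋ (div_mul_cancel₀ _ hq.ne')

lemma floor_add_le_and_le_of_forall_le_abs_sub {t h : ℝ} (hfar : ∀ k : ℤ, h ≤ |t - k|) :
    ⌊t⌋ + h ≤ t ∧ t ≤ ⌊t⌋ + 1 - h := by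
  have h₀ := hfar ⌊t⌋
  have h₁ := hfar (⌊t⌋ + 1)
  rw [abs_of_nonneg (sub_nonneg.2 (Int.floor_le t))] at h₀
  rw [Int.cast_add, Int.cast_one, abs_of_neg (sub_neg.2 (Int.lt_floor_add_one t))] at h₁
  constructor <;> linarith

lemma le_abs_sub_of_add_le_of_le_add_sub {t h : ℝ} {m : ℤ} (h₁ : m + h ≤ t) (h₂ : t ≤ m + 1 - h)
    (k : ℤ) : h ≤ |t - k| := by
  rcases le_or_gt k m with hkm | hmk
  · have : (k : ℝ) ≤ m := Int.cast_le.2 hkm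
    exact le_abs.2 (Or.inl (by linarith))
  · have : (m : ℝ) + 1 ≤ k := by exact_mod_cast hmk
    exact le_abs.2 (Or.inr (by linarith))

lemma mem_Icc_center_iff {Λ q : ℝ} (hΛ : Λ ≠ 0) (hq : 0 < q) (m x : ℝ) :
    x ∈ Set.Icc ((m + 1 / 2) / q - (1 / (2 * q) - 1 / (2 * Λ)))
        ((m + 1 / 2) / q + (1 / (2 * q) - 1 / (2 * Λ))) ↔
      m + q / (2 * Λ) ≤ x * q ∧ x * q ≤ m + 1 - q / (2 * Λ) := by
  have hlo : (m + 1 / 2) / q - (1 / (2 * q) - 1 / (2 * Λ)) = (m + q / (2 * Λ)) / q := by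
    field_simp; ring
  have hhi : (m + 1 / 2) / q + (1 / (2 * q) - 1 / (2 * Λ)) = (m + 1 - q / (2 * Λ)) / q := by
    field_simp; ring
  rw [Set.mem_Icc, hlo, hhi, div_le_iff₀ hq, le_div_iff₀ hq]

theorem stmt7_general (Λ : ℝ) (N : ℕ) (hN : 0 < N) (a : ℤ) (q : ℕ)
    (hodd : Odd q) (hfrag : (q : ℝ) < Λ) :
    (∀ m : ℤ, 0 ≤ m → (m : ℝ) < (q + 1) / 2 →
      ∀ x ∈ Set.Icc (((m : ℝ) + 1 / 2) / q - (1 / (2 * q) - 1 / (2 * Λ)))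
          (((m : ℝ) + 1 / 2) / q + (1 / (2 * q) - 1 / (2 * Λ))) ∩ Set.Icc (0 : ℝ) (1 / 2),
        pden N q Λ a x = 0) ∧
    (∀ l u : ℝ, l < u → Set.Ioo l u ⊆ Set.Ioo (0 : ℝ) (1 / 2) →
      (∃ v : ℝ, ∀ x ∈ Set.Ioo l u, pden N q Λ a x = v) →
      (∃ m : ℤ, 0 ≤ m ∧ (m : ℝ) < (q + 1) / 2 ∧
        Set.Ioo l u ⊆ Set.Icc (((m : ℝ) + 1 / 2) / q - (1 / (2 * q) - 1 / (2 * Λ)))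
          (((m : ℝ) + 1 / 2) / q + (1 / (2 * q) - 1 / (2 * Λ)))) ∧
      ∀ x ∈ Set.Ioo l u, pden N q Λ a x = 0) := by
  have hΛ : 0 < Λ := (Nat.cast_nonneg q).trans_lt hfrag
  have hq : (0 : ℝ) < q := Nat.cast_pos.2 hodd.pos
  refine ⟨fun m _ _ x ⟨hx, _⟩ => ?_, fun l u hlu hsub ⟨v, hv⟩ => ?_⟩
  · obtain ⟨h₁, h₂⟩ := (mem_Icc_center_iff hΛ.ne' hq m x).1 hx
    exact pden_eq_zero_of_forall_le_abs_mul_sub hΛ hodd.pos N a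
      (le_abs_sub_of_add_le_of_le_add_sub h₁ h₂)
  have hfar := forall_le_abs_mul_sub_of_pden_eq hodd hfrag hN a isOpen_Ioo hv
  have hx₀ : (l + u) / 2 ∈ Set.Ioo l u := ⟨by linarith, by linarith⟩
  have hfloor : ∀ x ∈ Set.Ioo l u, ⌊x * q⌋ = ⌊(l + u) / 2 * q⌋ :=
    fun x hx => floor_mul_eq_of_ordConnected Set.ordConnected_Ioo hq
      (fun y hy k => abs_sub_pos.1 ((by positivity : (0 : ℝ) < q / (2 * Λ)).trans_le
        (hfar y hy k))) hx hx₀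
  have hx₀q : 0 < (l + u) / 2 * q ∧ (l + u) / 2 * q < q / 2 := by
    obtain ⟨h₀, h₁⟩ := hsub hx₀
    constructor <;> nlinarith
  refine ⟨⟨⌊(l + u) / 2 * q⌋, Int.floor_nonneg.2 hx₀q.1.le, ?_, fun x hx => ?_⟩,
    fun x hx => pden_eq_zero_of_forall_le_abs_mul_sub hΛ hodd.pos N a (hfar x hx)⟩
  · linarith [Int.floor_le ((l + u) / 2 * q)]
  · rw [mem_Icc_center_iff hΛ.ne' hq, ← hfloor x hx]
    exact floor_add_le_and_le_of_forall_le_abs_sub (hfar x hx)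

theorem stmt7 (Λ : ℝ) (hΛ : 1 < Λ) (N : ℕ) (hN : 0 < N) (a : ℤ) (q : ℕ)
    (hq : 0 < q) (hcop : Int.gcd a q = 1) (hodd : Odd q) (hfrag : (q : ℝ) < Λ) :
    (∀ m : ℤ, 0 ≤ m → (m : ℝ) < (q + 1) / 2 →
      ∀ x ∈ Set.Icc (((m : ℝ) + 1 / 2) / q - (1 / (2 * q) - 1 / (2 * Λ)))
          (((m : ℝ) + 1 / 2) / q + (1 / (2 * q) - 1 / (2 * Λ))) ∩ Set.Icc (0 : ℝ) (1 / 2),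
        pden N q Λ a x = 0) ∧
    (∀ l u : ℝ, l < u → Set.Ioo l u ⊆ Set.Ioo (0 : ℝ) (1 / 2) →
      (∃ v : ℝ, ∀ x ∈ Set.Ioo l u, pden N q Λ a x = v) →
      (∃ m : ℤ, 0 ≤ m ∧ (m : ℝ) < (q + 1) / 2 ∧
        Set.Ioo l u ⊆ Set.Icc (((m : ℝ) + 1 / 2) / q - (1 / (2 * q) - 1 / (2 * Λ)))
          (((m : ℝ) + 1 / 2) / q + (1 / (2 * q) - 1 / (2 * Λ)))) ∧
      ∀ x ∈ Set.Ioo l u, pden N q Λ a x = 0) :=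
  stmt7_general Λ N hN a q hodd hfrag
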